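/- arXiv:1901.05353 — 2 statements merged into one kernel-verified Lean document; each statement's English description precedes it below -/
import Mathlib

section
/- (Donsker–Varadhan / Catoni variational formula) Let (A, 𝒜) be a measurable space, ν a probability measure on A, and h : A → ℝ measurable with ∫ exp(h) dν < ∞. Then log ∫ exp(h) dν = sup over probability measures μ ≪ ν of ( ∫ h dμ − KL(μ, ν) ), with the convention ∞ − ∞ = −∞. -/
/-!
Write `Z = ∫ exp h dν` and `ν_h = e^h ν / Z` for the Gibbs measure. For `μ ≪ ν`, Gibbs' inequality
against `ν_h` reads `0 ≤ KL(μ, ν_h) = KL(μ, ν) - ∫ h dμ + log Z`, which is the upper bound.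

The measure `ν_h` would attain equality, but `h` need not be `ν_h`-integrable. Tilting instead by
the truncation `min h c` cures this, since `|h| e^(min h c) ≤ 1 + e^c e^h`, and yields the value
`∫ h - ∫ min h c + log Z_c ≥ log Z_c`, where `Z_c = ∫ exp (min h c) dν` tends to `Z` as `c → ∞`
by monotone convergence.
-/

open MeasureTheory Real Filter Topology InformationTheory

namespace MeasureTheory

variable {α : Type*} {mα : MeasurableSpace α} {ν : Measure α} {f : α → ℝ}

lemma integral_sub_integral_llr_le_log_integral_exp {μ : Measure α} [IsProbabilityMeasure μ]
    [SigmaFinite ν] (hμν : μ ≪ ν) (hfμ : Integrable f μ)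
    (hfν : Integrable (fun x ↦ exp (f x)) ν) (h_int : Integrable (llr μ ν) μ) :
    ∫ x, f x ∂μ - ∫ x, llr μ ν x ∂μ ≤ log (∫ x, exp (f x) ∂ν) := by
  have : NeZero ν := ⟨fun hν ↦ IsProbabilityMeasure.ne_zero μ (by simpa [hν] using hμν)⟩
  have := isProbabilityMeasure_tilted hfν
  have gibbs := integral_llr_add_sub_measure_univ_nonneg
    (hμν.trans (absolutelyContinuous_tilted hfν)) (integrable_llr_tilted_right hμν hfμ h_int hfν)
  rw [integral_llr_tilted_right hμν hfμ hfν h_int] at gibbs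
  simp only [probReal_univ] at gibbs
  linarith

lemma llr_tilted_self [SigmaFinite ν] (hfν : Integrable (fun x ↦ exp (f x)) ν) :
    llr (ν.tilted f) ν =ᵐ[ν.tilted f] fun x ↦ f x - log (∫ x, exp (f x) ∂ν) :=
  (tilted_absolutelyContinuous ν f).ae_le (log_rnDeriv_tilted_left_self hfν)

lemma integrable_llr_tilted_self [SigmaFinite ν] (hfν : Integrable (fun x ↦ exp (f x)) ν)
    (hf : Integrable f (ν.tilted f)) : Integrable (llr (ν.tilted f) ν) (ν.tilted f) :=
  (hf.sub (integrable_const _)).congr (llr_tilted_self hfν).symm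

lemma integral_llr_tilted_self [SigmaFinite ν] [NeZero ν]
    (hfν : Integrable (fun x ↦ exp (f x)) ν) (hf : Integrable f (ν.tilted f)) :
    ∫ x, llr (ν.tilted f) ν x ∂ν.tilted f = ∫ x, f x ∂ν.tilted f - log (∫ x, exp (f x) ∂ν) := by
  have := isProbabilityMeasure_tilted hfν
  rw [integral_congr_ae (llr_tilted_self hfν), integral_sub hf (integrable_const _),
    integral_const, probReal_univ, one_smul]

lemma integrable_exp_min (hfν : Integrable (fun x ↦ exp (f x)) ν) (c : ℝ) :
    Integrable (fun x ↦ exp (min (f x) c)) ν := by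
  refine hfν.mono ?_ (ae_of_all _ fun x ↦ ?_)
  · have hf := aemeasurable_of_aemeasurable_exp hfν.1.aemeasurable
    exact (hf.min aemeasurable_const).exp.aestronglyMeasurable
  · simp only [norm_eq_abs, abs_exp, exp_le_exp, min_le_left]

lemma abs_mul_exp_min_le (x c : ℝ) : |x| * exp (min x c) ≤ 1 + exp c * exp x := by
  have := mul_pos (exp_pos c) (exp_pos x)
  rcases le_or_gt x 0 with hx | hx
  · calc |x| * exp (min x c) ≤ -x * exp (-(-x)) := by
          rw [abs_of_nonpos hx, neg_neg]
          gcongr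
          exacts [neg_nonneg.mpr hx, min_le_left x c]
      _ ≤ exp (-1) := mul_exp_neg_le_exp_neg_one (-x)
      _ ≤ 1 + exp c * exp x := by linarith [exp_neg_one_lt_half]
  · calc |x| * exp (min x c) ≤ exp c * exp x := by
          rw [abs_of_pos hx, mul_comm]
          gcongr
          exacts [min_le_right x c, by linarith [add_one_le_exp x]]
      _ ≤ 1 + exp c * exp x := by linarith

lemma integrable_tilted_min [IsFiniteMeasure ν] (hfν : Integrable (fun x ↦ exp (f x)) ν) (c : ℝ) :
    Integrable f (ν.tilted fun x ↦ min (f x) c) := by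
  rw [integrable_tilted_iff (integrable_exp_min hfν c)]
  refine Integrable.mono (g := fun x ↦ 1 + exp c * exp (f x))
    ((integrable_const 1).add (hfν.const_mul (exp c))) ?_ (ae_of_all _ fun x ↦ ?_)
  · exact (integrable_exp_min hfν c).1.smul
      (aemeasurable_of_aemeasurable_exp hfν.1.aemeasurable).aestronglyMeasurable
  · rw [smul_eq_mul, norm_mul, norm_of_nonneg (exp_pos _).le, mul_comm, norm_eq_abs]
    exact (abs_mul_exp_min_le (f x) c).trans (le_norm_self _)

lemma log_integral_exp_min_le [IsFiniteMeasure ν] [NeZero ν]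
    (hfν : Integrable (fun x ↦ exp (f x)) ν) (c : ℝ) :
    log (∫ x, exp (min (f x) c) ∂ν) ≤ ∫ x, f x ∂ν.tilted (fun x ↦ min (f x) c)
      - ∫ x, llr (ν.tilted fun x ↦ min (f x) c) ν x ∂ν.tilted (fun x ↦ min (f x) c) := by
  have hf := integrable_tilted_min hfν c
  have hmin : Integrable (fun x ↦ min (f x) c) (ν.tilted fun x ↦ min (f x) c) :=
    hf.inf (integrable_const c)
  rw [integral_llr_tilted_self (integrable_exp_min hfν c) hmin]
  have := integral_mono hmin hf fun x ↦ min_le_left (f x) c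
  linarith

lemma tendsto_integral_exp_min (hfν : Integrable (fun x ↦ exp (f x)) ν) :
    Tendsto (fun n : ℕ ↦ ∫ x, exp (min (f x) n) ∂ν) atTop (𝓝 (∫ x, exp (f x) ∂ν)) := by
  refine integral_tendsto_of_tendsto_of_monotone (fun n ↦ integrable_exp_min hfν n) hfν
    (ae_of_all _ fun x m n hmn ↦ ?_) (ae_of_all _ fun x ↦ ?_)
  · exact exp_le_exp.mpr (min_le_min_left _ (Nat.cast_le.mpr hmn))
  · refine tendsto_const_nhds.congr' ?_
    filter_upwards [tendsto_natCast_atTop_atTop.eventually_ge_atTop (f x)] with n hn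
    rw [min_eq_left hn]

end MeasureTheory

/-- Terms with `∫ h dμ = ∞` or `KL(μ, ν) = ∞` are `-∞` under the convention `∞ - ∞ = -∞` and do not
affect the supremum, so the set ranges over the `μ` for which `h` and `log (dμ/dν)` are
`μ`-integrable. -/
theorem donsker_varadhan_general
    {A : Type*} [MeasurableSpace A] (ν : Measure A) [IsProbabilityMeasure ν]
    (h : A → ℝ)
    (hexp : Integrable (fun a => Real.exp (h a)) ν) :
    Real.log (∫ a, Real.exp (h a) ∂ν) =
      sSup {r : ℝ | ∃ μ : Measure A, IsProbabilityMeasure μ ∧ μ ≪ ν ∧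
        Integrable h μ ∧
        Integrable (fun a => Real.log ((μ.rnDeriv ν a).toReal)) μ ∧
        r = (∫ a, h a ∂μ) - ∫ a, Real.log ((μ.rnDeriv ν a).toReal) ∂μ} := by
  set S := {r : ℝ | ∃ μ : Measure A, IsProbabilityMeasure μ ∧ μ ≪ ν ∧
        Integrable h μ ∧
        Integrable (fun a => Real.log ((μ.rnDeriv ν a).toReal)) μ ∧
        r = (∫ a, h a ∂μ) - ∫ a, Real.log ((μ.rnDeriv ν a).toReal) ∂μ}
  have upper : ∀ r ∈ S, r ≤ log (∫ a, exp (h a) ∂ν) := by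
    rintro _ ⟨μ, _, hμν, hμ, hllr, rfl⟩
    exact integral_sub_integral_llr_le_log_integral_exp hμν hμ hexp hllr
  have tilted_mem (c : ℝ) : ∫ a, h a ∂ν.tilted (fun a ↦ min (h a) c)
      - ∫ a, llr (ν.tilted fun a ↦ min (h a) c) ν a ∂ν.tilted (fun a ↦ min (h a) c) ∈ S :=
    have hmin := integrable_exp_min hexp c
    have hμ := integrable_tilted_min hexp c
    ⟨_, isProbabilityMeasure_tilted hmin, tilted_absolutelyContinuous ν _, hμ,
      integrable_llr_tilted_self hmin (hμ.inf (integrable_const c)), rfl⟩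
  refine le_antisymm ?_ (csSup_le ⟨_, tilted_mem 0⟩ upper)
  refine le_of_tendsto ((continuousAt_log (integral_exp_pos hexp).ne').tendsto.comp
    (tendsto_integral_exp_min hexp)) (Eventually.of_forall fun n ↦ ?_)
  exact (log_integral_exp_min_le hexp n).trans (le_csSup ⟨_, upper⟩ (tilted_mem n))

/-- Donsker–Varadhan / Catoni variational formula:
`log ∫ exp h dν = sup_{μ ≪ ν} (∫ h dμ − KL(μ,ν))`, the supremum running over
probability measures `μ ≪ ν`.  (Terms with `∫ h dμ = ∞` or `KL(μ,ν) = ∞`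
are `−∞` by the convention `∞ − ∞ = −∞`, hence do not contribute to the
supremum; we therefore range over `μ` for which both quantities are finite,
i.e. `h` and `log (dμ/dν)` are `μ`-integrable.) -/
theorem donsker_varadhan
    {A : Type*} [MeasurableSpace A] (ν : Measure A) [IsProbabilityMeasure ν]
    (h : A → ℝ) (hmeas : Measurable h)
    (hexp : Integrable (fun a => Real.exp (h a)) ν) :
    Real.log (∫ a, Real.exp (h a) ∂ν) =
      sSup {r : ℝ | ∃ μ : Measure A, IsProbabilityMeasure μ ∧ μ ≪ ν ∧
        Integrable h μ ∧
        Integrable (fun a => Real.log ((μ.rnDeriv ν a).toReal)) μ ∧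
        r = (∫ a, h a ∂μ) - ∫ a, Real.log ((μ.rnDeriv ν a).toReal) ∂μ} :=
  donsker_varadhan_general ν h hexp
end

section
/- Under the assumptions of the Alquier–Guedj theorem (p > 1, q = p/(p−1), M_{ψq,n} < ∞, ε ∈ (0,1)), with probability at least 1 − ε, for every probability measure μ ≪ π₀: ∫ R dμ ≤ ∫ r_n dμ + (M_{ψq,n}/ε)^{1/q} · ( ∫ (dμ/dπ₀)^p dπ₀ )^{1/p}. -/
open MeasureTheory Real ENNReal

/-!
The event `∫ |r_n - R|^q dπ₀ ≤ M_{ψq,n}/ε` does not depend on the posterior. By Tonelli the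
left-hand side has expectation `M_{ψq,n}`, so Markov's inequality gives the event probability at
least `1 - ε`. On it, for every `μ ≪ π₀`, writing `∫ |r_n - R| dμ = ∫ (dμ/dπ₀) |r_n - R| dπ₀` and
applying Hölder's inequality with exponents `p` and `q` bounds `∫ R dμ - ∫ r_n dμ`.
-/

/-- Unlike `meas_ge_le_lintegral_div`, this allows the levels `c = 0` and `c = ∞`. -/
lemma meas_lt_le_of_lintegral_le_mul {α : Type*} [MeasurableSpace α] {μ : Measure α}
    {f : α → ℝ≥0∞} (hf : AEMeasurable f μ) {δ c : ℝ≥0∞} (h : ∫⁻ x, f x ∂μ ≤ δ * c) :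
    μ {x | c < f x} ≤ δ := by
  rcases eq_or_ne c 0 with rfl | hc0
  · have hf0 : f =ᵐ[μ] 0 := (lintegral_eq_zero_iff' hf).mp (by simpa using h)
    have hnull : μ {x | 0 < f x} = 0 :=
      measure_mono_null (fun x (hx : 0 < f x) => hx.ne') (ae_iff.mp hf0)
    simp [hnull]
  rcases eq_or_ne c ∞ with rfl | hctop
  · simp
  calc μ {x | c < f x} ≤ μ {x | c ≤ f x} := measure_mono fun x (hx : c < f x) => hx.le
    _ ≤ (∫⁻ x, f x ∂μ) / c := meas_ge_le_lintegral_div hf hc0 hctop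
    _ ≤ δ * c / c := by gcongr
    _ = δ := ENNReal.mul_div_cancel_right hc0 hctop

lemma lintegral_lintegral_ofReal_eq_ofReal_integral_integral {α β : Type*} [MeasurableSpace α]
    [MeasurableSpace β] {μ : Measure α} {ν : Measure β} [SFinite μ] [SFinite ν] {f : α → β → ℝ}
    (hf : Measurable fun z : α × β => f z.1 z.2) (hf_nonneg : ∀ x y, 0 ≤ f x y)
    (hf_int : ∀ x, Integrable (f x) ν) (hf_int' : Integrable (fun x => ∫ y, f x y ∂ν) μ) :
    ∫⁻ y, ∫⁻ x, ENNReal.ofReal (f x y) ∂μ ∂ν = ENNReal.ofReal (∫ x, ∫ y, f x y ∂ν ∂μ) := by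
  have hf' : Measurable fun z : α × β => ENNReal.ofReal (f z.1 z.2) :=
    ENNReal.measurable_ofReal.comp hf
  rw [lintegral_lintegral_swap (f := fun y x => ENNReal.ofReal (f x y))
      (hf'.comp measurable_swap).aemeasurable,
    ofReal_integral_eq_lintegral_ofReal hf_int'
      (ae_of_all _ fun x => integral_nonneg (hf_nonneg x))]
  refine lintegral_congr fun x => ?_
  exact (ofReal_integral_eq_lintegral_ofReal (hf_int x) (ae_of_all _ (hf_nonneg x))).symm

lemma memLp_ofReal_of_integrable_rpow {α : Type*} [MeasurableSpace α] {μ : Measure α}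
    {g : α → ℝ} {r : ℝ} (hr : 0 < r) (hg : AEStronglyMeasurable g μ) (hg_nonneg : 0 ≤ᵐ[μ] g)
    (hint : Integrable (fun x => g x ^ r) μ) : MemLp g (ENNReal.ofReal r) μ := by
  rw [← integrable_norm_rpow_iff hg (by simp [hr]) ofReal_ne_top, toReal_ofReal hr.le]
  refine hint.congr ?_
  filter_upwards [hg_nonneg] with x hx
  rw [Real.norm_of_nonneg hx]

section ChangeOfMeasure

variable {α : Type*} [MeasurableSpace α] {μ ν : Measure α} [μ.HaveLebesgueDecomposition ν]
  [SigmaFinite μ] {p q : ℝ}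

theorem integral_le_Lp_rnDeriv_mul_Lq_of_nonneg (hμν : μ ≪ ν) (hpq : p.HolderConjugate q)
    {g : α → ℝ} (hg : AEStronglyMeasurable g ν) (hg_nonneg : 0 ≤ᵐ[ν] g)
    (hρ : Integrable (fun x => (μ.rnDeriv ν x).toReal ^ p) ν)
    (hgq : Integrable (fun x => g x ^ q) ν) :
    ∫ x, g x ∂μ ≤
      (∫ x, (μ.rnDeriv ν x).toReal ^ p ∂ν) ^ (1 / p) * (∫ x, g x ^ q ∂ν) ^ (1 / q) := by
  rw [← integral_toReal_rnDeriv_mul hμν]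
  exact integral_mul_le_Lp_mul_Lq_of_nonneg hpq (ae_of_all _ fun x => toReal_nonneg)
    hg_nonneg
    (memLp_ofReal_of_integrable_rpow hpq.pos
      (μ.measurable_rnDeriv ν).ennreal_toReal.aestronglyMeasurable
      (ae_of_all _ fun x => toReal_nonneg) hρ)
    (memLp_ofReal_of_integrable_rpow hpq.symm.pos hg hg_nonneg hgq)

theorem integral_le_integral_add_of_lintegral_rpow_abs_sub_le (hμν : μ ≪ ν)
    (hpq : p.HolderConjugate q) {f g : α → ℝ} (hf : Integrable f μ) (hg : Integrable g μ)
    (hfg : AEStronglyMeasurable (fun x => |g x - f x|) ν)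
    (hρ : Integrable (fun x => (μ.rnDeriv ν x).toReal ^ p) ν) {B : ℝ} (hB_nonneg : 0 ≤ B)
    (hB : ∫⁻ x, ENNReal.ofReal (|g x - f x| ^ q) ∂ν ≤ ENNReal.ofReal B) :
    ∫ x, f x ∂μ ≤
      ∫ x, g x ∂μ + B ^ (1 / q) * (∫ x, (μ.rnDeriv ν x).toReal ^ p ∂ν) ^ (1 / p) := by
  have hq_nonneg : ∀ x, 0 ≤ |g x - f x| ^ q := fun x => rpow_nonneg (abs_nonneg _) q
  have hgq : Integrable (fun x => |g x - f x| ^ q) ν :=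
    ⟨(hfg.aemeasurable.pow_const q).aestronglyMeasurable, by
      rw [hasFiniteIntegral_iff_ofReal (ae_of_all _ hq_nonneg)]
      exact hB.trans_lt ofReal_lt_top⟩
  have hgq_le : ∫ x, |g x - f x| ^ q ∂ν ≤ B := by
    rwa [← ofReal_le_ofReal_iff hB_nonneg,
      ofReal_integral_eq_lintegral_ofReal hgq (ae_of_all _ hq_nonneg)]
  have hdiff : ∫ x, f x ∂μ - ∫ x, g x ∂μ ≤ ∫ x, |g x - f x| ∂μ := by
    rw [← integral_sub hf hg]
    refine integral_mono (hf.sub hg) (hg.sub hf).abs fun x => ?_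
    simpa only [neg_sub] using neg_le_abs (g x - f x)
  have hholder := integral_le_Lp_rnDeriv_mul_Lq_of_nonneg hμν hpq hfg
    (ae_of_all _ fun x => abs_nonneg _) hρ hgq
  have hρ_nonneg : 0 ≤ (∫ x, (μ.rnDeriv ν x).toReal ^ p ∂ν) ^ (1 / p) :=
    rpow_nonneg (integral_nonneg fun x => rpow_nonneg toReal_nonneg p) _
  have hB_root : (∫ x, |g x - f x| ^ q ∂ν) ^ (1 / q) ≤ B ^ (1 / q) :=
    rpow_le_rpow (integral_nonneg hq_nonneg) hgq_le (one_div_nonneg.mpr hpq.symm.nonneg)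
  nlinarith [mul_le_mul_of_nonneg_left hB_root hρ_nonneg]

end ChangeOfMeasure
/-- One-sided Alquier–Guedj bound: with probability at least `1 − ε`, for
every posterior `μ ≪ π₀`,
`∫ R dμ ≤ ∫ r_n dμ + (M_{ψq,n}/ε)^{1/q} (∫ (dμ/dπ₀)^p dπ₀)^{1/p}`. -/
theorem alquier_guedj_one_sided_bound
    {Ω : Type*} [MeasurableSpace Ω] (P : Measure Ω) [IsProbabilityMeasure P]
    {F : Type*} [MeasurableSpace F] (π₀ : Measure F) [IsProbabilityMeasure π₀]
    (R : F → ℝ) (hR : Measurable R)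
    (rn : F → Ω → ℝ) (hrn : Measurable fun p : F × Ω => rn p.1 p.2)
    (p : ℝ) (hp : 1 < p) (q : ℝ) (hq : q = p / (p - 1))
    (ε : ℝ) (hε : ε ∈ Set.Ioo (0 : ℝ) 1)
    (Mq : ℝ) (hMq : Mq = ∫ φ, (∫ ω, |rn φ ω - R φ| ^ q ∂P) ∂π₀)
    (hMqfin : Integrable (fun φ => ∫ ω, |rn φ ω - R φ| ^ q ∂P) π₀)
    (hMqfin' : ∀ φ, Integrable (fun ω => |rn φ ω - R φ| ^ q) P) :
    (1 : ℝ≥0∞) - ENNReal.ofReal ε ≤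
      P {ω | ∀ μ : Measure F, IsProbabilityMeasure μ → μ ≪ π₀ →
        Integrable R μ → Integrable (fun φ => rn φ ω) μ →
        Integrable (fun φ => ((μ.rnDeriv π₀ φ).toReal) ^ p) π₀ →
        ∫ φ, R φ ∂μ ≤ (∫ φ, rn φ ω ∂μ) +
          (Mq / ε) ^ (1 / q) *
            (∫ φ, ((μ.rnDeriv π₀ φ).toReal) ^ p ∂π₀) ^ (1 / p)} := by
  obtain ⟨hε0, -⟩ := hε
  have hpq : p.HolderConjugate q := (Real.holderConjugate_iff_eq_conjExponent hp).mpr hq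
  have hΔ : Measurable fun z : F × Ω => |rn z.1 z.2 - R z.1| ^ q :=
    ((hrn.sub (hR.comp measurable_fst)).abs).pow_const q
  set G : Ω → ℝ≥0∞ := fun ω => ∫⁻ φ, ENNReal.ofReal (|rn φ ω - R φ| ^ q) ∂π₀
  have hG : Measurable G :=
    Measurable.lintegral_prod_right' ((ENNReal.measurable_ofReal.comp hΔ).comp measurable_swap)
  have hMq_nonneg : 0 ≤ Mq := hMq ▸
    integral_nonneg fun φ => integral_nonneg fun ω => rpow_nonneg (abs_nonneg _) q
  have hEG : ∫⁻ ω, G ω ∂P ≤ ENNReal.ofReal ε * ENNReal.ofReal (Mq / ε) := by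
    rw [← ofReal_mul hε0.le, mul_div_cancel₀ _ hε0.ne', hMq]
    exact (lintegral_lintegral_ofReal_eq_ofReal_integral_integral hΔ
      (fun φ ω => rpow_nonneg (abs_nonneg _) q) hMqfin' hMqfin).le
  have hbad : P {ω | ENNReal.ofReal (Mq / ε) < G ω} ≤ ENNReal.ofReal ε :=
    meas_lt_le_of_lintegral_le_mul hG.aemeasurable hEG
  calc (1 : ℝ≥0∞) - ENNReal.ofReal ε ≤ 1 - P {ω | ENNReal.ofReal (Mq / ε) < G ω} :=
      tsub_le_tsub_left hbad 1
    _ = P {ω | ENNReal.ofReal (Mq / ε) < G ω}ᶜ :=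
      (prob_compl_eq_one_sub (measurableSet_lt measurable_const hG)).symm
    _ ≤ _ := by
      refine measure_mono fun ω hω μ _ hμ hRμ hrnμ hρ => ?_
      exact integral_le_integral_add_of_lintegral_rpow_abs_sub_le hμ hpq hRμ hrnμ
          ((hrn.comp measurable_prodMk_right).sub hR).abs.aestronglyMeasurable hρ
          (div_nonneg hMq_nonneg hε0.le) (not_lt.mp hω)
end
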